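/- Replacing M by Ã = A ⊕ M and f ∈ M' by f̃ = (1̂_A, f) ∈ Ã', one has ⟨f̃, f̃⟩' ≥ 1 and J_{f̃} = J_f. -/

import Mathlib

open scoped RightActions

/-! The Hilbert C⋆-modules of the original (Mathlib, December 2024) were *right* modules:
`CStarModule A E` with `[SMul Aᵐᵒᵖ E]` and `⟪x, y <• a⟫ = ⟪x, y⟫ * a`, and `A` was a module
over itself with `⟪x, y⟫ = star x * y`. Current Mathlib's `CStarModule` is a left module with
another convention, so the old class and constructions are reproduced here. -/

/-- Old (right) Hilbert C⋆-module class, as in Mathlib of December 2024. -/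
class RightCStarModule (A E : Type*) [NonUnitalSemiring A] [StarRing A] [Module ℂ A]
    [AddCommGroup E] [Module ℂ E] [PartialOrder A] [SMul Aᵐᵒᵖ E] [Norm A] [Norm E]
    extends Inner A E where
  inner_add_right {x} {y} {z} : inner x (y + z) = inner x y + inner x z
  inner_self_nonneg {x} : 0 ≤ inner x x
  inner_self {x} : inner x x = 0 ↔ x = 0
  inner_op_smul_right {a : A} {x y : E} : inner x (y <• a) = inner x y * a
  inner_smul_right_complex {z : ℂ} {x} {y} : inner x (z • y) = z • inner x y
  star_inner x y : star (inner x y) = inner y x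
  norm_eq_sqrt_norm_inner_self x : ‖x‖ = √‖inner x x‖

namespace RightCStarModule

section general

variable {A E : Type*} [NonUnitalRing A] [StarRing A] [AddCommGroup E] [Module ℂ A]
  [Module ℂ E] [PartialOrder A] [SMul Aᵐᵒᵖ E] [Norm A] [Norm E] [RightCStarModule A E]

lemma inner_add_left' {x y z : E} : inner A (x + y) z = inner A x z + inner A y z := by
  rw [← star_inner, inner_add_right, star_add, star_inner, star_inner]

lemma inner_op_smul_left' {a : A} {x y : E} : inner A (x <• a) y = star a * inner A x y := by
  rw [← star_inner, inner_op_smul_right, star_mul, star_inner]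

lemma inner_smul_right_real' {z : ℝ} {x y : E} : inner A x (z • y) = z • inner A x y := by
  have h₁ : z • y = (z : ℂ) • y := by simp
  rw [h₁, inner_smul_right_complex]
  simp

variable [StarModule ℂ A]

lemma inner_smul_left_complex' {z : ℂ} {x y : E} : inner A (z • x) y = star z • inner A x y := by
  rw [← star_inner, inner_smul_right_complex, star_smul, star_inner]

lemma inner_smul_left_real' {z : ℝ} {x y : E} : inner A (z • x) y = z • inner A x y := by
  have h₁ : z • x = (z : ℂ) • x := by simp
  rw [h₁, inner_smul_left_complex']
  simp

/-- The inner product as a sesquilinear map. -/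
def innerₛₗ' : E →ₗ⋆[ℂ] E →ₗ[ℂ] A where
  toFun x := { toFun := fun y => inner A x y
               map_add' := fun z y => inner_add_right
               map_smul' := fun z y => inner_smul_right_complex }
  map_add' z y := by ext; exact inner_add_left'
  map_smul' z y := by ext; exact inner_smul_left_complex'

lemma inner_zero_left' {x : E} : inner A (0 : E) x = 0 := by
  exact (innerₛₗ' (A := A)).map_zero₂ x

lemma inner_zero_right' {x : E} : inner A x (0 : E) = 0 :=
  (innerₛₗ' (A := A) x).map_zero

lemma inner_sub_right' {x y z : E} : inner A x (y - z) = inner A x y - inner A x z :=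
  (innerₛₗ' (A := A) x).map_sub y z

lemma inner_sub_left' {x y z : E} : inner A (x - y) z = inner A x z - inner A y z := by
  exact (congrArg (fun f => f z) ((innerₛₗ' (A := A)).map_sub x y)).trans
    (LinearMap.sub_apply _ _ z)

end general

section norm

variable {A E : Type*} [NonUnitalCStarAlgebra A] [PartialOrder A] [AddCommGroup E]
  [Module ℂ E] [SMul Aᵐᵒᵖ E] [Norm E] [RightCStarModule A E]

lemma norm_nonneg' (A : Type*) {E : Type*} [NonUnitalCStarAlgebra A] [PartialOrder A] [AddCommGroup E]
    [Module ℂ E] [SMul Aᵐᵒᵖ E] [Norm E] [RightCStarModule A E]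
    {x : E} : 0 ≤ ‖x‖ := by
  rw [norm_eq_sqrt_norm_inner_self (A := A)]; positivity

lemma norm_pos' (A : Type*) {E : Type*} [NonUnitalCStarAlgebra A] [PartialOrder A] [AddCommGroup E]
    [Module ℂ E] [SMul Aᵐᵒᵖ E] [Norm E] [RightCStarModule A E]
    {x : E} (hx : x ≠ 0) : 0 < ‖x‖ := by
  simp only [norm_eq_sqrt_norm_inner_self (A := A), Real.sqrt_pos, norm_pos_iff]
  intro H
  rw [inner_self] at H
  exact hx H

lemma norm_zero_iff' (A : Type*) {E : Type*} [NonUnitalCStarAlgebra A] [PartialOrder A] [AddCommGroup E]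
    [Module ℂ E] [SMul Aᵐᵒᵖ E] [Norm E] [RightCStarModule A E]
    (x : E) : ‖x‖ = 0 ↔ x = 0 :=
  ⟨fun h => by simpa [norm_eq_sqrt_norm_inner_self (A := A), inner_self] using h,
    fun h => by simp [h, norm_eq_sqrt_norm_inner_self (A := A), inner_self]⟩

variable [StarOrderedRing A]

lemma inner_mul_inner_swap_le' {x y : E} :
    inner A y x * inner A x y ≤ ‖x‖ ^ 2 • inner A y y := by
  rcases eq_or_ne x 0 with h | h
  · simp [h, inner_zero_left', inner_zero_right', (norm_zero_iff' A (0 : E)).2 rfl]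
  · have h₁ : ∀ (a : A),
        (0 : A) ≤ ‖x‖ ^ 2 • (star a * a) - ‖x‖ ^ 2 • (inner A y x * a)
                  - ‖x‖ ^ 2 • (star a * inner A x y)
                  + ‖x‖ ^ 2 • (‖x‖ ^ 2 • inner A y y) := fun a => by
      calc (0 : A) ≤ inner A (x <• a - ‖x‖ ^ 2 • y) (x <• a - ‖x‖ ^ 2 • y) := by
                      exact inner_self_nonneg
            _ = star a * inner A x x * a - ‖x‖ ^ 2 • (inner A y x * a)
                  - ‖x‖ ^ 2 • (star a * inner A x y)
                  + ‖x‖ ^ 2 • (‖x‖ ^ 2 • inner A y y) := by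
                      simp only [inner_sub_right', inner_op_smul_right, inner_sub_left',
                        inner_op_smul_left', inner_smul_left_real', sub_mul,
                        smul_mul_assoc, inner_smul_right_real', smul_sub,
                        mul_assoc]
                      abel
            _ ≤ ‖x‖ ^ 2 • (star a * a) - ‖x‖ ^ 2 • (inner A y x * a)
                  - ‖x‖ ^ 2 • (star a * inner A x y)
                  + ‖x‖ ^ 2 • (‖x‖ ^ 2 • inner A y y) := by
                      gcongr
                      calc _ ≤ ‖inner A x x‖ • (star a * a) :=
                          CStarAlgebra.star_left_conjugate_le_norm_smul
                              (hb := star_inner (A := A) x x)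
                        _ = (√‖inner A x x‖) ^ 2 • (star a * a) := by
                          rw [Real.sq_sqrt]
                          positivity
                        _ = ‖x‖ ^ 2 • (star a * a) := by
                          rw [← norm_eq_sqrt_norm_inner_self]
    specialize h₁ (inner A x y)
    simp only [star_inner, sub_self, zero_sub, le_neg_add_iff_add_le, add_zero] at h₁
    rwa [smul_le_smul_iff_of_pos_left (pow_pos (norm_pos' A h) _)] at h₁

lemma norm_inner_le' {x y : E} : ‖inner A x y‖ ≤ ‖x‖ * ‖y‖ := by
  have := calc ‖inner A x y‖ ^ 2 = ‖inner A y x * inner A x y‖ := by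
                rw [← star_inner (A := A) x y, CStarRing.norm_star_mul_self, pow_two]
    _ ≤ ‖‖x‖ ^ 2 • inner A y y‖ := by
                refine CStarAlgebra.norm_le_norm_of_nonneg_of_le ?_ inner_mul_inner_swap_le'
                rw [← star_inner (A := A) x y]
                exact star_mul_self_nonneg _
    _ = ‖x‖ ^ 2 * ‖inner A y y‖ := by simp [norm_smul]
    _ = ‖x‖ ^ 2 * ‖y‖ ^ 2 := by
                simp only [norm_eq_sqrt_norm_inner_self (A := A) y, norm_nonneg, Real.sq_sqrt]
    _ = (‖x‖ * ‖y‖) ^ 2 := by simp only [mul_pow]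
  refine (pow_le_pow_iff_left₀ (norm_nonneg _) ?_ (by simp)).mp this
  exact mul_nonneg (norm_nonneg' A) (norm_nonneg' A)

lemma norm_triangle' (A : Type*) {E : Type*} [NonUnitalCStarAlgebra A] [PartialOrder A] [AddCommGroup E]
    [Module ℂ E] [SMul Aᵐᵒᵖ E] [Norm E] [RightCStarModule A E] [StarOrderedRing A]
    (x y : E) : ‖x + y‖ ≤ ‖x‖ + ‖y‖ := by
  have h : ‖x + y‖ ^ 2 ≤ (‖x‖ + ‖y‖) ^ 2 := by
    calc _ ≤ ‖inner A x x + inner A y x‖ + ‖inner A x y‖ + ‖inner A y y‖ := by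
          simp only [norm_eq_sqrt_norm_inner_self (A := A), inner_add_right, inner_add_left',
            ← add_assoc, norm_nonneg, Real.sq_sqrt]
          exact norm_add₃_le
      _ ≤ ‖inner A x x‖ + ‖inner A y x‖ + ‖inner A x y‖ + ‖inner A y y‖ := by
          gcongr; exact norm_add_le _ _
      _ ≤ ‖inner A x x‖ + ‖y‖ * ‖x‖ + ‖x‖ * ‖y‖ + ‖inner A y y‖ := by
          gcongr <;> exact norm_inner_le'
      _ = ‖x‖ ^ 2 + ‖y‖ * ‖x‖ + ‖x‖ * ‖y‖ + ‖y‖ ^ 2 := by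
          simp [norm_eq_sqrt_norm_inner_self (A := A)]
      _ = (‖x‖ + ‖y‖) ^ 2 := by ring
  refine (pow_le_pow_iff_left₀ (norm_nonneg' A) ?_ (by simp)).mp h
  exact add_nonneg (norm_nonneg' A) (norm_nonneg' A)

/-- The normed space core of a (right) Hilbert C⋆-module. -/
lemma normedSpaceCore' (A : Type*) {E : Type*} [NonUnitalCStarAlgebra A] [PartialOrder A] [AddCommGroup E]
    [Module ℂ E] [SMul Aᵐᵒᵖ E] [Norm E] [RightCStarModule A E] [StarOrderedRing A] :
    NormedSpace.Core ℂ E where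
  norm_nonneg _ := norm_nonneg' A
  norm_eq_zero_iff x := norm_zero_iff' A x
  norm_smul c x := by
    simp only [norm_eq_sqrt_norm_inner_self (A := A), inner_smul_left_complex',
      inner_smul_right_complex, smul_smul, norm_smul, Complex.star_def]
    rw [mul_comm, Complex.mul_conj', Real.sqrt_mul (by positivity)]
    simp [mul_comm]
  norm_triangle x y := norm_triangle' A x y

end norm

end RightCStarModule

namespace WithCStarModule

variable {A : Type*} [NonUnitalCStarAlgebra A] [PartialOrder A]

/-- `A` as a (right) Hilbert C⋆-module over itself, `⟪x, y⟫ = star x * y`. -/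
instance instRightCStarModuleSelf [StarOrderedRing A] : RightCStarModule A A where
  inner x y := star x * y
  inner_add_right := mul_add ..
  inner_self_nonneg := star_mul_self_nonneg _
  inner_self := CStarRing.star_mul_self_eq_zero_iff _
  inner_op_smul_right := (mul_assoc ..).symm
  inner_smul_right_complex := mul_smul_comm ..
  star_inner x y := by simp
  norm_eq_sqrt_norm_inner_self {x} := by
    rw [← sq_eq_sq₀ (norm_nonneg _) (by positivity)]
    simpa [sq] using Eq.symm <| CStarRing.norm_star_mul_self

variable {E F : Type*}
variable [NormedAddCommGroup E] [Module ℂ E] [SMul Aᵐᵒᵖ E]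
variable [NormedAddCommGroup F] [Module ℂ F] [SMul Aᵐᵒᵖ F]
variable [RightCStarModule A E] [RightCStarModule A F]

/-- The norm of the direct sum of (right) Hilbert C⋆-modules. -/
noncomputable instance instNormRightProd : Norm C⋆ᵐᵒᵈ(A, E × F) where
  norm x := √‖inner A (equiv A (E × F) x).1 (equiv A (E × F) x).1
    + inner A (equiv A (E × F) x).2 (equiv A (E × F) x).2‖

variable [StarOrderedRing A]

/-- The direct sum of (right) Hilbert C⋆-modules. -/
noncomputable instance instRightCStarModuleProd : RightCStarModule A C⋆ᵐᵒᵈ(A, E × F) where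
  inner x y := inner A (equiv A (E × F) x).1 (equiv A (E × F) y).1
    + inner A (equiv A (E × F) x).2 (equiv A (E × F) y).2
  inner_add_right {x y z} := by
    simp only [equiv_add, Prod.fst_add, Prod.snd_add, RightCStarModule.inner_add_right]
    abel
  inner_self_nonneg := add_nonneg RightCStarModule.inner_self_nonneg
    RightCStarModule.inner_self_nonneg
  inner_self {x} := by
    refine ⟨fun h ↦ ?_, fun h ↦ ?_⟩
    · apply (equiv A (E × F)).injective
      ext
      · refine RightCStarModule.inner_self.mp <| le_antisymm ?_
          (RightCStarModule.inner_self_nonneg (A := A))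
        exact le_add_of_nonneg_right RightCStarModule.inner_self_nonneg |>.trans_eq h
      · refine RightCStarModule.inner_self.mp <| le_antisymm ?_
          (RightCStarModule.inner_self_nonneg (A := A))
        exact le_add_of_nonneg_left RightCStarModule.inner_self_nonneg |>.trans_eq h
    · subst h
      simp [RightCStarModule.inner_zero_left']
  inner_op_smul_right {a x y} := by
    simp only [equiv_smul, Prod.smul_fst, Prod.smul_snd, RightCStarModule.inner_op_smul_right, add_mul]
  inner_smul_right_complex {z x y} := by
    simp only [equiv_smul, Prod.smul_fst, Prod.smul_snd, RightCStarModule.inner_smul_right_complex,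
      smul_add]
  star_inner x y := by simp only [star_add, RightCStarModule.star_inner]
  norm_eq_sqrt_norm_inner_self {x} := rfl

noncomputable instance instNormedAddCommGroupRightProd : NormedAddCommGroup C⋆ᵐᵒᵈ(A, E × F) :=
  NormedAddCommGroup.ofCore (RightCStarModule.normedSpaceCore' A)

noncomputable instance instNormedSpaceRightProd : NormedSpace ℂ C⋆ᵐᵒᵈ(A, E × F) :=
  .ofCore (RightCStarModule.normedSpaceCore' A)

end WithCStarModule

section Defs

variable {A : Type*} [CStarAlgebra A] [PartialOrder A] [StarOrderedRing A]
variable {E : Type*} [NormedAddCommGroup E] [NormedSpace ℂ E] [SMul Aᵐᵒᵖ E] [RightCStarModule A E]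

/-- Membership in the dual module `M'`: a bounded `A`-antilinear functional on `E`
(the functional `f` plays the role of `m ↦ ⟨m, f⟩`). -/
def IsDualFunctional (f : E → A) : Prop :=
  (∀ x y, f (x + y) = f x + f y) ∧
  (∀ (c : ℂ) (x : E), f (c • x) = (starRingEnd ℂ) c • f x) ∧
  (∀ (x : E) (a : A), f (x <• a) = star a * f x) ∧
  ∃ C : ℝ, ∀ x, ‖f x‖ ≤ C * ‖x‖

/-- The canonical image `m̂` of `m ∈ M` in the dual module: `m̂ x = ⟨x, m⟩`. -/
def mhat (m : E) : E → A := fun x => inner A x m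

/-- The right action of `A` on dual functionals: `f·a`. -/
def dualAct (f : E → A) (a : A) : E → A := fun x => f x * a

/-- The right ideal `J_f = {a ∈ A : f·a ∈ M}`. -/
def Jf (f : E → A) : Set A := {a : A | ∃ m : E, dualAct f a = mhat m}

/-- The right ideal `J_f` is essential in `A`. -/
def JfEssential (f : E → A) : Prop := ∀ a : A, (∀ j ∈ Jf f, a * j = 0) → a = 0

/-- The norm of a functional in the dual module (operator norm). -/
noncomputable def dualNorm (f : E → A) : ℝ :=
  sInf {C : ℝ | 0 ≤ C ∧ ∀ x, ‖f x‖ ≤ C * ‖x‖}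

end Defs

section DualInner

variable {A : Type*} [CStarAlgebra A] [PartialOrder A] [StarOrderedRing A]
variable {E : Type*} [NormedAddCommGroup E] [NormedSpace ℂ E] [SMul Aᵐᵒᵖ E] [RightCStarModule A E]

/-- `inn` is an extension of the inner product of `M` to the dual module `M'`,
making `M'` a (complete) Hilbert C*-module; this is the meaning of
"`M` is a Hilbert C*-module with a Hilbert dual".  -/
structure IsDualInner (inn : (E → A) → (E → A) → A) : Prop where
  extends_inner : ∀ m n : E, inn (mhat m) (mhat n) = inner A m n
  eval : ∀ f : E → A, IsDualFunctional f → ∀ m : E, f m = inn (mhat m) f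
  add_right : ∀ f g h : E → A, inn f (g + h) = inn f g + inn f h
  act_right : ∀ (f g : E → A) (a : A), inn f (dualAct g a) = inn f g * a
  star_inn : ∀ f g : E → A, star (inn f g) = inn g f
  nonneg : ∀ f : E → A, IsDualFunctional f → 0 ≤ inn f f
  definite : ∀ f : E → A, IsDualFunctional f → inn f f = 0 → f = 0
  complete : ∀ u : ℕ → E → A, (∀ n, IsDualFunctional (u n)) →
    (∀ ε : ℝ, 0 < ε → ∃ N, ∀ p q, N ≤ p → N ≤ q → ‖inn (u p - u q) (u p - u q)‖ < ε) →
    ∃ g : E → A, IsDualFunctional g ∧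
      Filter.Tendsto (fun n => ‖inn (u n - g) (u n - g)‖) Filter.atTop (nhds 0)

end DualInner

/-! With `m₀ = (1, 0) ∈ A ⊕ M` one has `f̃ = m̂₀ + (0, f)`, and the two summands are orthogonal
in the dual because `(0, f)` vanishes at `m₀`; hence `⟨f̃, f̃⟩' = ⟨m₀, m₀⟩ + ⟨(0, f), (0, f)⟩' ≥ 1`.
For the ideals, `(g, f)·a = (g·a, f·a)` is some `m̂` exactly when both components are, so
`J_{(g, f)} = J_g ∩ J_f`, while `1̂_A·a = â` shows `J_{1̂_A} = A`. -/

open scoped WithCStarModule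

lemma IsDualFunctional.map_zero {A : Type*} [CStarAlgebra A] {E : Type*} [NormedAddCommGroup E]
    [NormedSpace ℂ E] [SMul Aᵐᵒᵖ E] {f : E → A} (hf : IsDualFunctional f) : f 0 = 0 := by
  simpa using hf.1 0 0

lemma mhat_apply_zero {A : Type*} [CStarAlgebra A] [PartialOrder A] {E : Type*}
    [NormedAddCommGroup E] [NormedSpace ℂ E] [SMul Aᵐᵒᵖ E] [RightCStarModule A E] (m : E) :
    mhat (A := A) m 0 = 0 :=
  RightCStarModule.inner_zero_left'

/-- The functional `(g, f)` on `E ⊕ F`; the paper's `1̂_A` is `star`, so `f̃ = dualProd star f`. -/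
def dualProd {A E F : Type*} [Add A] (g : E → A) (f : F → A) : C⋆ᵐᵒᵈ(A, E × F) → A :=
  fun p => g (WithCStarModule.equiv A (E × F) p).1 + f (WithCStarModule.equiv A (E × F) p).2

lemma dualProd_inj {A E F : Type*} [AddZeroClass A] [Zero E] [Zero F] {g g' : E → A}
    {f f' : F → A} (hg : g 0 = 0) (hg' : g' 0 = 0) (hf : f 0 = 0) (hf' : f' 0 = 0) :
    dualProd g f = dualProd g' f' ↔ g = g' ∧ f = f' := by
  refine ⟨fun h => ⟨funext fun x => ?_, funext fun y => ?_⟩, fun ⟨rfl, rfl⟩ => rfl⟩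
  · simpa [dualProd, hf, hf'] using congrFun h ((WithCStarModule.equiv A (E × F)).symm (x, 0))
  · simpa [dualProd, hg, hg'] using congrFun h ((WithCStarModule.equiv A (E × F)).symm (0, y))

lemma dualAct_dualProd {A E F : Type*} [CStarAlgebra A] (g : E → A) (f : F → A) (a : A) :
    dualAct (dualProd g f) a = dualProd (dualAct g a) (dualAct f a) :=
  funext fun _ => add_mul _ _ _

section DirectSum

variable {A : Type*} [CStarAlgebra A] [PartialOrder A] [StarOrderedRing A]
variable {E F : Type*} [NormedAddCommGroup E] [NormedSpace ℂ E] [SMul Aᵐᵒᵖ E]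
  [RightCStarModule A E] [NormedAddCommGroup F] [NormedSpace ℂ F] [SMul Aᵐᵒᵖ F]
  [RightCStarModule A F]

lemma norm_equiv_snd_le (x : C⋆ᵐᵒᵈ(A, E × F)) :
    ‖(WithCStarModule.equiv A (E × F) x).2‖ ≤ ‖x‖ := by
  rw [RightCStarModule.norm_eq_sqrt_norm_inner_self (A := A)]
  refine Real.sqrt_le_sqrt <|
    CStarAlgebra.norm_le_norm_of_nonneg_of_le RightCStarModule.inner_self_nonneg ?_
  exact le_add_of_nonneg_left RightCStarModule.inner_self_nonneg

lemma IsDualFunctional.comp_snd {f : F → A} (hf : IsDualFunctional f) :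
    IsDualFunctional fun p : C⋆ᵐᵒᵈ(A, E × F) => f (WithCStarModule.equiv A (E × F) p).2 := by
  obtain ⟨map_add, map_smul, map_op_smul, C, hC⟩ := hf
  refine ⟨fun _ _ => map_add _ _, fun c _ => map_smul c _, fun _ a => map_op_smul _ a,
    max C 0, fun x => ?_⟩
  calc _ ≤ C * ‖(WithCStarModule.equiv A (E × F) x).2‖ := hC _
    _ ≤ max C 0 * ‖x‖ :=
      mul_le_mul (le_max_left _ _) (norm_equiv_snd_le x) (norm_nonneg _) (le_max_right _ _)

lemma mhat_eq_dualProd (m : C⋆ᵐᵒᵈ(A, E × F)) :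
    mhat m = dualProd (mhat (WithCStarModule.equiv A (E × F) m).1)
      (mhat (WithCStarModule.equiv A (E × F) m).2) :=
  rfl

lemma Jf_dualProd {g : E → A} {f : F → A} (hg : g 0 = 0) (hf : f 0 = 0) :
    Jf (dualProd g f) = Jf g ∩ Jf f := by
  ext a
  simp only [Jf, Set.mem_ofPred_eq, Set.mem_inter_iff, dualAct_dualProd]
  constructor
  · rintro ⟨m, hm⟩
    rw [mhat_eq_dualProd, dualProd_inj (by simp [dualAct, hg]) (mhat_apply_zero _)
      (by simp [dualAct, hf]) (mhat_apply_zero _)] at hm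
    exact ⟨⟨_, hm.1⟩, ⟨_, hm.2⟩⟩
  · rintro ⟨⟨m₁, h₁⟩, ⟨m₂, h₂⟩⟩
    exact ⟨(WithCStarModule.equiv A (E × F)).symm (m₁, m₂), by rw [h₁, h₂]; rfl⟩

lemma Jf_star : Jf (star : A → A) = Set.univ :=
  Set.eq_univ_of_forall fun a => ⟨a, rfl⟩

lemma dualProd_star_eq_mhat_add (f : F → A) :
    dualProd star f = mhat ((WithCStarModule.equiv A (A × F)).symm (1, 0)) +
      fun p => f (WithCStarModule.equiv A (A × F) p).2 := by
  funext p
  change _ = star (WithCStarModule.equiv A (A × F) p).1 * 1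
    + inner A (WithCStarModule.equiv A (A × F) p).2 (0 : F) + _
  rw [mul_one, RightCStarModule.inner_zero_right', add_zero]
  rfl

lemma inner_equiv_symm_one_zero_self :
    inner A ((WithCStarModule.equiv A (A × F)).symm (1, 0))
      ((WithCStarModule.equiv A (A × F)).symm (1, 0)) = 1 := by
  change star (1 : A) * 1 + inner A (0 : F) 0 = 1
  rw [star_one, mul_one, RightCStarModule.inner_zero_right', add_zero]

end DirectSum

section DualInner

variable {A : Type*} [CStarAlgebra A] [PartialOrder A]
variable {E : Type*} [NormedAddCommGroup E] [NormedSpace ℂ E] [SMul Aᵐᵒᵖ E] [RightCStarModule A E]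
variable {inn : (E → A) → (E → A) → A}

lemma IsDualInner.add_left (hinn : IsDualInner inn) (f g h : E → A) :
    inn (f + g) h = inn f h + inn g h := by
  rw [← hinn.star_inn, hinn.add_right, star_add, hinn.star_inn, hinn.star_inn]

lemma IsDualInner.inn_mhat_add_self {d : E → A} (hinn : IsDualInner inn)
    (hd : IsDualFunctional d) {m : E} (hdm : d m = 0) :
    inn (mhat m + d) (mhat m + d) = inner A m m + inn d d := by
  have h₁ : inn (mhat m) d = 0 := (hinn.eval d hd m).symm.trans hdm
  have h₂ : inn d (mhat m) = 0 := by rw [← hinn.star_inn, h₁, star_zero]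
  rw [hinn.add_left, hinn.add_right, hinn.add_right, h₁, h₂, hinn.extends_inner]
  abel

end DualInner

lemma IsDualInner.one_le_inn_dualProd_star {A : Type*} [CStarAlgebra A] [PartialOrder A]
    [StarOrderedRing A] {F : Type*} [NormedAddCommGroup F] [NormedSpace ℂ F] [SMul Aᵐᵒᵖ F]
    [RightCStarModule A F] {f : F → A} (hf : IsDualFunctional f)
    {inn : (C⋆ᵐᵒᵈ(A, A × F) → A) → (C⋆ᵐᵒᵈ(A, A × F) → A) → A} (hinn : IsDualInner inn) :
    1 ≤ inn (dualProd star f) (dualProd star f) := by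
  have hd := hf.comp_snd (E := A)
  rw [dualProd_star_eq_mhat_add, hinn.inn_mhat_add_self hd (by simpa using hf.map_zero),
    inner_equiv_symm_one_zero_self]
  exact le_add_of_nonneg_right (hinn.nonneg _ hd)

open scoped WithCStarModule in
/-- Replacing `M` by `Ã = A ⊕ M` and `f ∈ M'` by `f̃ = (1̂_A, f) ∈ Ã'`, one has
`⟨f̃, f̃⟩' ≥ 1` and `J_{f̃} = J_f`. -/
theorem tilde_ge_one_and_Jf_eq
    {A : Type*} [CStarAlgebra A] [PartialOrder A] [StarOrderedRing A]
    {E : Type*} [NormedAddCommGroup E] [NormedSpace ℂ E] [SMul Aᵐᵒᵖ E] [RightCStarModule A E]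
    (f : E → A) (hf : IsDualFunctional f)
    (innT : (C⋆ᵐᵒᵈ(A, A × E) → A) → (C⋆ᵐᵒᵈ(A, A × E) → A) → A) (hinnT : IsDualInner innT) :
    (1 : A) ≤ innT
        (fun p => star (WithCStarModule.equiv A (A × E) p).1 + f (WithCStarModule.equiv A (A × E) p).2)
        (fun p => star (WithCStarModule.equiv A (A × E) p).1 + f (WithCStarModule.equiv A (A × E) p).2) ∧
    Jf (fun p : C⋆ᵐᵒᵈ(A, A × E) =>
        star (WithCStarModule.equiv A (A × E) p).1 + f (WithCStarModule.equiv A (A × E) p).2)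
      = Jf f := by
  change 1 ≤ innT (dualProd star f) (dualProd star f) ∧ Jf (dualProd star f) = Jf f
  refine ⟨hinnT.one_le_inn_dualProd_star hf, ?_⟩
  rw [Jf_dualProd (star_zero _) hf.map_zero, Jf_star, Set.univ_inter]
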